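/- Let A be an n×n real matrix such that D(A) belongs to the class 𝒟 and D(A) is strongly connected. Then the group inverse A^# exists if and only if Δ_A ≠ 0. -/

import Mathlib

open Matrix

/-- Adjacency in a digraph given by relation `G`: a 2-cycle between distinct `i` and `j`. -/
def Adjd {n : ℕ} (G : Fin n → Fin n → Prop) (i j : Fin n) : Prop :=
  i ≠ j ∧ G i j ∧ G j i

/-- `G` is a simple symmetric digraph: no loops and edges come in both directions. -/
def IsSSD {n : ℕ} (G : Fin n → Fin n → Prop) : Prop :=
  (∀ i, ¬ G i i) ∧ ∀ i j, G i j → G j i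

/-- A vertex is pendant if it is incident to exactly one 2-cycle. -/
def Pendant {n : ℕ} (G : Fin n → Fin n → Prop) (i : Fin n) : Prop :=
  ∃! j, Adjd G i j

/-- The class 𝒟: simple symmetric digraphs in which every non-pendant vertex is
adjacent to at least one pendant vertex. -/
def InClassD {n : ℕ} (G : Fin n → Fin n → Prop) : Prop :=
  IsSSD G ∧ ∀ i, ¬ Pendant G i → ∃ j, Adjd G i j ∧ Pendant G j

/-- Strong connectivity: a directed path from every vertex to every other vertex. -/
def StronglyConnected {n : ℕ} (G : Fin n → Fin n → Prop) : Prop :=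
  ∀ i j : Fin n, Relation.ReflTransGen G i j

/-- An unordered pair `e` is a 2-cycle of `G`. -/
def IsEdge {n : ℕ} (G : Fin n → Fin n → Prop) (e : Sym2 (Fin n)) : Prop :=
  ∃ i j, e = s(i, j) ∧ Adjd G i j

/-- A matching: a set of pairwise vertex-disjoint 2-cycles. -/
def IsMatching {n : ℕ} (G : Fin n → Fin n → Prop) (M : Finset (Sym2 (Fin n))) : Prop :=
  (∀ e ∈ M, IsEdge G e) ∧
  ∀ e ∈ M, ∀ f ∈ M, e ≠ f → ∀ v : Fin n, v ∈ e → v ∉ f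

/-- A maximum matching: a matching of maximum cardinality. -/
def IsMaxMatching {n : ℕ} (G : Fin n → Fin n → Prop) (M : Finset (Sym2 (Fin n))) : Prop :=
  IsMatching G M ∧ ∀ M', IsMatching G M' → M'.card ≤ M.card

/-- A cycle chain, recorded by its list of (distinct) vertices `i₁, …, i_{m+1}`. -/
def IsCycleChain {n : ℕ} (G : Fin n → Fin n → Prop) (c : List (Fin n)) : Prop :=
  c.Nodup ∧ 2 ≤ c.length ∧ c.Chain' (Adjd G)

/-- A cycle chain from `i` to `j`. -/
def IsCycleChainBtw {n : ℕ} (G : Fin n → Fin n → Prop) (i j : Fin n) (c : List (Fin n)) : Prop :=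
  IsCycleChain G c ∧ c.head? = some i ∧ c.getLast? = some j

/-- The list of 2-cycles of a cycle chain. -/
def chainEdges {n : ℕ} (c : List (Fin n)) : List (Sym2 (Fin n)) :=
  List.zipWith (fun a b => s(a, b)) c c.tail

/-- The cycle chain `c` is alternating with respect to `M`: its 2-cycles are alternately
in `M` and outside `M`, with the first and last 2-cycle in `M` (so its length is odd). -/
def IsAltChain {n : ℕ} (M : Finset (Sym2 (Fin n))) (c : List (Fin n)) : Prop :=
  Odd (chainEdges c).length ∧
  ∀ k (h : k < (chainEdges c).length), ((chainEdges c).get ⟨k, h⟩ ∈ M ↔ Even k)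

/-- The digraph of a square matrix: edge `(i,j)` iff `A i j ≠ 0`. -/
def DA {n : ℕ} (A : Matrix (Fin n) (Fin n) ℝ) : Fin n → Fin n → Prop :=
  fun i j => A i j ≠ 0

/-- The cycle product `a_{ij} a_{ji}` of a 2-cycle. -/
def cycProd {n : ℕ} (A : Matrix (Fin n) (Fin n) ℝ) (e : Sym2 (Fin n)) : ℝ :=
  Sym2.lift ⟨fun i j => A i j * A j i, fun i j => mul_comm _ _⟩ e

/-- The matching product η(M) of a matching `M`. -/
noncomputable def matchProd {n : ℕ} (A : Matrix (Fin n) (Fin n) ℝ)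
    (M : Finset (Sym2 (Fin n))) : ℝ :=
  ∏ e ∈ M, cycProd A e

/-- The (finite) collection of all maximum matchings of `D(A)`. -/
noncomputable def maxMatchings {n : ℕ} (A : Matrix (Fin n) (Fin n) ℝ) :
    Finset (Finset (Sym2 (Fin n))) :=
  {M | IsMaxMatching (DA A) M}.toFinite.toFinset

/-- Δ_A: the sum of the matching products over all maximum matchings of `D(A)`. -/
noncomputable def Delta {n : ℕ} (A : Matrix (Fin n) (Fin n) ℝ) : ℝ :=
  ∑ M ∈ maxMatchings A, matchProd A M

/-- 𝕄(i,j): maximum matchings with respect to which some cycle chain from `i` to `j`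
is an alternating cycle chain. -/
def MMset {n : ℕ} (A : Matrix (Fin n) (Fin n) ℝ) (i j : Fin n) :
    Set (Finset (Sym2 (Fin n))) :=
  {M | IsMaxMatching (DA A) M ∧ ∃ c, IsCycleChainBtw (DA A) i j c ∧ IsAltChain M c}

/-- `i` and `j` are maximally matchable: 𝕄(i,j) ≠ ∅. -/
def MaxMatchable {n : ℕ} (A : Matrix (Fin n) (Fin n) ℝ) (i j : Fin n) : Prop :=
  (MMset A i j).Nonempty

open scoped Classical in
/-- The (unique) alternating cycle chain from `i` to `j`, when it exists. -/
noncomputable def theChain {n : ℕ} (A : Matrix (Fin n) (Fin n) ℝ) (i j : Fin n) :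
    List (Fin n) :=
  if h : ∃ c, IsCycleChainBtw (DA A) i j c ∧ ∃ M ∈ MMset A i j, IsAltChain M c
  then h.choose else []

/-- The path product along a cycle chain: `a_{i₁ i₂} a_{i₂ i₃} ⋯ a_{i_m i_{m+1}}`. -/
def pathProd {n : ℕ} (A : Matrix (Fin n) (Fin n) ℝ) (c : List (Fin n)) : ℝ :=
  (List.zipWith (fun a b => A a b) c c.tail).prod

open scoped Classical in
/-- β_{ij} = (−1)^{(m−1)/2} P_m(i,j) for maximally matchable `i, j`, and `0` otherwise. -/
noncomputable def beta {n : ℕ} (A : Matrix (Fin n) (Fin n) ℝ) (i j : Fin n) : ℝ :=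
  if MaxMatchable A i j then
    (-1 : ℝ) ^ (((theChain A i j).length - 2) / 2) * pathProd A (theChain A i j)
  else 0

/-- β̄_{i,j}(M): product of the cycle products of the 2-cycles of `M` not contained in
the alternating cycle chain from `i` to `j`. -/
noncomputable def betaBar {n : ℕ} (A : Matrix (Fin n) (Fin n) ℝ) (i j : Fin n)
    (M : Finset (Sym2 (Fin n))) : ℝ :=
  ∏ e ∈ M.filter (fun e => e ∉ chainEdges (theChain A i j)), cycProd A e

/-- μ_{ij} = β_{ij} · Σ_{M ∈ 𝕄(i,j)} β̄_{i,j}(M). -/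
noncomputable def mu {n : ℕ} (A : Matrix (Fin n) (Fin n) ℝ) (i j : Fin n) : ℝ :=
  beta A i j * ∑ M ∈ (MMset A i j).toFinite.toFinset, betaBar A i j M

/-- `X` is a group inverse of `A`. -/
def IsGroupInverse {n : ℕ} (A X : Matrix (Fin n) (Fin n) ℝ) : Prop :=
  A * X * A = A ∧ X * A * X = X ∧ A * X = X * A

/-- A tree digraph: strongly connected and all of its cycles have length 2. -/
def IsTreeDigraph {n : ℕ} (G : Fin n → Fin n → Prop) : Prop :=
  StronglyConnected G ∧
  ∀ (a : Fin n) (l : List (Fin n)), (a :: l).Nodup → List.Chain G a l →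
    G ((a :: l).getLast (List.cons_ne_nil a l)) a → (a :: l).length = 2

/-- A star tree digraph: a tree digraph with a center adjacent to every other vertex,
every other vertex being adjacent only to the center. -/
def IsStarTree {n : ℕ} (G : Fin n → Fin n → Prop) : Prop :=
  IsTreeDigraph G ∧
  ∃ c : Fin n, (∀ j, j ≠ c → Adjd G c j) ∧ ∀ i j, Adjd G i j → i = c ∨ j = c

/-- A corona digraph: a simple symmetric digraph in which each non-pendant vertex is
adjacent to exactly one pendant vertex. -/
def IsCorona {n : ℕ} (G : Fin n → Fin n → Prop) : Prop :=
  IsSSD G ∧ ∀ i, ¬ Pendant G i → ∃! j, Adjd G i j ∧ Pendant G j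

/-- 𝕄(i): the maximum matchings in which vertex `i` is matched. -/
noncomputable def MMi {n : ℕ} (A : Matrix (Fin n) (Fin n) ℝ) (i : Fin n) :
    Finset (Finset (Sym2 (Fin n))) :=
  {M | IsMaxMatching (DA A) M ∧ ∃ e ∈ M, i ∈ e}.toFinite.toFinset


/-!
In a digraph of class 𝒟 a maximum matching must match every non-pendant vertex `v` to a pendant
neighbour and must contain every 2-cycle joining two pendant vertices; conversely every such
choice of pendant neighbours gives a maximum matching. Hence `Δ_A` factors as the product over
the non-pendant vertices `v` of `w(v) = ∑ a_{vq} a_{qv}` (`q` running over the pendant neighbours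
of `v`), times nonzero cycle products.

On the other side, `A^#` exists iff `ker A² = ker A`. The row of a pendant vertex has a single
nonzero entry, which forces `ker A² = ker A` as soon as every `w(v)` is nonzero; if `w(v) = 0`,
the column of `v` with its non-pendant entries removed lies in the range of `A` and is killed by
`A`.
-/

theorem exists_groupInverse_of_eq_mul_mul {M : Type*} [Monoid M] {a y z : M}
    (hy : a = a * a * y) (hz : a = z * a * a) :
    ∃ x, a * x * a = a ∧ x * a * x = x ∧ a * x = x * a := by
  have hza : z * a = a * y := by
    calc z * a = z * (a * a * y) := by rw [← hy]
      _ = a * y := by rw [← mul_assoc, ← mul_assoc, ← hz]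
  have hx : z * a * y = a * y * y := by rw [hza]
  have hax : a * (z * a * y) = a * y := by rw [hx, ← mul_assoc, ← mul_assoc, ← hy]
  have hxa : z * a * y * a = a * y := by
    calc z * a * y * a = z * (a * y) * a := by simp only [mul_assoc]
      _ = z * a := by rw [← hza, mul_assoc, ← hz]
      _ = a * y := hza
  refine ⟨z * a * y, ?_, ?_, by rw [hax, hxa]⟩
  · rw [hax, ← hza, ← hz]
  · rw [mul_assoc, hax, ← mul_assoc, hxa, hx]

namespace Matrix

variable {ι K : Type*} [Fintype ι] [Field K]

theorem rank_mul_self_eq_of_mulVec_mulVec {A : Matrix ι ι K}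
    (h : ∀ x, A *ᵥ (A *ᵥ x) = 0 → A *ᵥ x = 0) : (A * A).rank = A.rank := by
  have hker : LinearMap.ker (A * A).mulVecLin = LinearMap.ker A.mulVecLin := by
    refine le_antisymm (fun x hx => ?_) (fun x hx => ?_)
    · simpa [mulVec_mulVec] using h x (by simpa [← mulVec_mulVec] using hx)
    · rw [LinearMap.mem_ker, mulVecLin_apply] at hx ⊢
      rw [← mulVec_mulVec, hx, mulVec_zero]
  have h₁ := LinearMap.finrank_range_add_finrank_ker (A * A).mulVecLin
  have h₂ := LinearMap.finrank_range_add_finrank_ker A.mulVecLin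
  rw [hker] at h₁
  unfold rank
  omega

theorem exists_eq_mul_mul_of_rank_mul_self_eq [DecidableEq ι] {A : Matrix ι ι K}
    (h : (A * A).rank = A.rank) : ∃ Y, A = A * A * Y := by
  have hrange : LinearMap.range (A * A).mulVecLin = LinearMap.range A.mulVecLin :=
    Submodule.eq_of_le_of_finrank_eq
      (by rw [mulVecLin_mul]; exact LinearMap.range_comp_le_range _ _) h
  have hcol : ∀ j, A.col j ∈ LinearMap.range (A * A).mulVecLin := fun j => by
    rw [hrange, ← mulVec_single_one]
    exact LinearMap.mem_range_self _ _
  choose y hy using hcol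
  exact ⟨of fun i j => y j i, ext fun i j => (congrFun (hy j) i).symm⟩

theorem exists_isGroupInverse_iff {n : ℕ} (A : Matrix (Fin n) (Fin n) ℝ) :
    (∃ X, IsGroupInverse A X) ↔ ∀ x, A *ᵥ (A *ᵥ x) = 0 → A *ᵥ x = 0 := by
  constructor
  · rintro ⟨X, hAXA, -, hcomm⟩ x hx
    calc A *ᵥ x = (X * (A * A)) *ᵥ x := by rw [← mul_assoc, ← hcomm, hAXA]
      _ = 0 := by rw [← mulVec_mulVec, ← mulVec_mulVec, hx, mulVec_zero]
  · intro h
    have hrank := rank_mul_self_eq_of_mulVec_mulVec h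
    obtain ⟨Y, hY⟩ := exists_eq_mul_mul_of_rank_mul_self_eq hrank
    obtain ⟨Z, hZ⟩ := exists_eq_mul_mul_of_rank_mul_self_eq (A := Aᵀ)
      (by rw [← transpose_mul, rank_transpose, rank_transpose, hrank])
    have hZ' : A = Zᵀ * A * A := by
      simpa [transpose_mul, mul_assoc] using congrArg transpose hZ
    exact exists_groupInverse_of_eq_mul_mul hY hZ'

end Matrix

section Matching

variable {n : ℕ} {G : Fin n → Fin n → Prop} {M : Finset (Sym2 (Fin n))}
  {a b p u v : Fin n} {e f : Sym2 (Fin n)}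

theorem Adjd.symm (h : Adjd G a b) : Adjd G b a := ⟨h.1.symm, h.2.2, h.2.1⟩

theorem IsEdge.exists_eq_mk (he : IsEdge G e) (hu : u ∈ e) : ∃ w, e = s(u, w) ∧ Adjd G u w := by
  obtain ⟨i, j, rfl, hij⟩ := he
  rcases Sym2.mem_iff.mp hu with rfl | rfl
  · exact ⟨j, rfl, hij⟩
  · exact ⟨i, Sym2.eq_swap, hij.symm⟩

theorem IsEdge.ne_of_mk (he : IsEdge G s(a, b)) : a ≠ b := by
  obtain ⟨i, j, h, hij⟩ := he
  rcases Sym2.eq_iff.mp h with ⟨rfl, rfl⟩ | ⟨rfl, rfl⟩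
  exacts [hij.1, hij.1.symm]

theorem Pendant.eq_of_isEdge (hp : Pendant G p) (he : IsEdge G e) (hf : IsEdge G f)
    (hpe : p ∈ e) (hpf : p ∈ f) : e = f := by
  obtain ⟨w, rfl, hw⟩ := he.exists_eq_mk hpe
  obtain ⟨w', rfl, hw'⟩ := hf.exists_eq_mk hpf
  rw [hp.unique hw hw']

theorem IsMatching.eq_of_mem (hM : IsMatching G M) (he : e ∈ M) (hf : f ∈ M) (hue : u ∈ e)
    (huf : u ∈ f) : e = f :=
  by_contra fun hef => hM.2 e he f hf hef u hue huf

theorem IsMatching.mono {M' : Finset (Sym2 (Fin n))} (hM : IsMatching G M) (h : M' ⊆ M) :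
    IsMatching G M' :=
  ⟨fun e he => hM.1 e (h he), fun e he f hf => hM.2 e (h he) f (h hf)⟩

theorem IsMatching.insert_mk (hM : IsMatching G M) (hab : Adjd G a b) (ha : ∀ e ∈ M, a ∉ e)
    (hb : ∀ e ∈ M, b ∉ e) : IsMatching G (insert s(a, b) M) := by
  have hfree : ∀ e ∈ M, ∀ w ∈ s(a, b), w ∉ e := by
    intro e he w hw
    rcases Sym2.mem_iff.mp hw with rfl | rfl
    exacts [ha e he, hb e he]
  refine ⟨fun e he => ?_, fun e he f hf hef w hwe hwf => ?_⟩
  · rcases Finset.mem_insert.mp he with rfl | he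
    exacts [⟨a, b, rfl, hab⟩, hM.1 e he]
  · rcases Finset.mem_insert.mp he with rfl | he <;> rcases Finset.mem_insert.mp hf with rfl | hf
    exacts [hef rfl, hfree f hf w hwe hwf, hfree e he w hwf hwe, hM.2 e he f hf hef w hwe hwf]

theorem IsMaxMatching.false_of_adjd (hM : IsMaxMatching G M) (hab : Adjd G a b)
    (ha : ∀ e ∈ M, a ∉ e) (hb : ∀ e ∈ M, b ∉ e) : False := by
  have hcard := hM.2 _ (hM.1.insert_mk hab ha hb)
  rw [Finset.card_insert_of_notMem fun h => ha _ h (Sym2.mem_mk_left a b)] at hcard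
  omega

theorem IsMatching.forall_notMem_of_pendant (hM : IsMatching G M) (hp : Pendant G p)
    (hpv : Adjd G p v) (h : s(p, v) ∉ M) : ∀ e ∈ M, p ∉ e := by
  intro e he hpe
  obtain ⟨w, rfl, hw⟩ := (hM.1 e he).exists_eq_mk hpe
  exact h (hp.unique hw hpv ▸ he)

theorem IsMaxMatching.insert_erase (hM : IsMaxMatching G M) (hab : s(a, b) ∈ M)
    (hap : Adjd G a p) (hp : ∀ e ∈ M, p ∉ e) :
    IsMaxMatching G (insert s(a, p) (M.erase s(a, b))) := by
  have ha : ∀ e ∈ M.erase s(a, b), a ∉ e := fun e he hae =>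
    Finset.ne_of_mem_erase he
      (hM.1.eq_of_mem (Finset.mem_of_mem_erase he) hab hae (Sym2.mem_mk_left a b))
  refine ⟨(hM.1.mono (Finset.erase_subset _ _)).insert_mk hap ha
    fun e he => hp e (Finset.mem_of_mem_erase he), fun M' hM' => ?_⟩
  rw [Finset.card_insert_of_notMem fun h => ha _ h (Sym2.mem_mk_left a p),
    Finset.card_erase_add_one hab]
  exact hM.2 M' hM'

theorem IsMaxMatching.exists_mem_of_adjd_pendant (hM : IsMaxMatching G M) (hvp : Adjd G v p)
    (hp : Pendant G p) : ∃ e ∈ M, v ∈ e := by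
  by_contra! hv
  exact hM.false_of_adjd hvp hv
    (hM.1.forall_notMem_of_pendant hp hvp.symm fun h => hv _ h (Sym2.mem_mk_right p v))

theorem IsMaxMatching.pendant_of_mem (hD : InClassD G) (hM : IsMaxMatching G M)
    (hab : s(a, b) ∈ M) (ha : ¬ Pendant G a) : Pendant G b := by
  by_contra hb
  obtain ⟨p, hap, hp⟩ := hD.2 a ha
  obtain ⟨r, hbr, hr⟩ := hD.2 b hb
  have hpb : p ≠ b := fun h => hb (h ▸ hp)
  have hpfree : ∀ e ∈ M, p ∉ e := hM.1.forall_notMem_of_pendant hp hap.symm fun h => by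
    have := hM.1.eq_of_mem h hab (Sym2.mem_mk_right p a) (Sym2.mem_mk_left a b)
    exact hpb (Sym2.congr_right.mp (Sym2.eq_swap.trans this))
  -- Rematching `a` to its pendant neighbour frees `b`, whose own pendant neighbour `r` is free.
  have hM' := hM.insert_erase hab hap hpfree
  obtain ⟨e, he, hbe⟩ := hM'.exists_mem_of_adjd_pendant hbr hr
  rcases Finset.mem_insert.mp he with rfl | he
  · rcases Sym2.mem_iff.mp hbe with h | h
    exacts [(hM.1.1 _ hab).ne_of_mk h.symm, hpb h.symm]
  · exact Finset.ne_of_mem_erase he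
      (hM.1.eq_of_mem (Finset.mem_of_mem_erase he) hab hbe (Sym2.mem_mk_right a b))

end Matching

section PendantMatching

open scoped Classical

variable {n : ℕ} {G : Fin n → Fin n → Prop} {M : Finset (Sym2 (Fin n))} {u v : Fin n}
  {e : Sym2 (Fin n)}

noncomputable def pendantNbrs (G : Fin n → Fin n → Prop) (v : Fin n) : Finset (Fin n) :=
  {q | Pendant G q ∧ Adjd G v q}

noncomputable def pendantEdges (G : Fin n → Fin n → Prop) : Finset (Sym2 (Fin n)) :=
  {e | IsEdge G e ∧ ∀ v ∈ e, Pendant G v}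

noncomputable def pendantChoices (G : Fin n → Fin n → Prop) :
    Finset ({v // ¬ Pendant G v} → Fin n) :=
  Fintype.piFinset fun v => pendantNbrs G v.1

noncomputable def pendantMatching (G : Fin n → Fin n → Prop) (p : {v // ¬ Pendant G v} → Fin n) :
    Finset (Sym2 (Fin n)) :=
  Finset.univ.image (fun v => s(v.1, p v)) ∪ pendantEdges G

theorem mem_pendantNbrs {q : Fin n} : q ∈ pendantNbrs G v ↔ Pendant G q ∧ Adjd G v q := by
  simp [pendantNbrs]

theorem mem_pendantEdges : e ∈ pendantEdges G ↔ IsEdge G e ∧ ∀ v ∈ e, Pendant G v := by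
  simp [pendantEdges]

theorem mem_pendantChoices {p : {v // ¬ Pendant G v} → Fin n} :
    p ∈ pendantChoices G ↔ ∀ v, Pendant G (p v) ∧ Adjd G v (p v) := by
  simp [pendantChoices, mem_pendantNbrs]

theorem IsMaxMatching.pendantEdges_subset (hM : IsMaxMatching G M) : pendantEdges G ⊆ M := by
  intro e he
  obtain ⟨⟨a, b, rfl, hab⟩, hpend⟩ := mem_pendantEdges.mp he
  by_contra h
  exact hM.false_of_adjd hab
    (hM.1.forall_notMem_of_pendant (hpend a (Sym2.mem_mk_left a b)) hab h)
    (hM.1.forall_notMem_of_pendant (hpend b (Sym2.mem_mk_right a b)) hab.symm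
      (Sym2.eq_swap ▸ h))

theorem IsMaxMatching.exists_mem_pendantNbrs (hD : InClassD G) (hM : IsMaxMatching G M)
    (hv : ¬ Pendant G v) : ∃ w ∈ pendantNbrs G v, s(v, w) ∈ M := by
  obtain ⟨p, hvp, hp⟩ := hD.2 v hv
  obtain ⟨e, he, hve⟩ := hM.exists_mem_of_adjd_pendant hvp hp
  obtain ⟨w, rfl, hw⟩ := (hM.1.1 e he).exists_eq_mk hve
  exact ⟨w, mem_pendantNbrs.mpr ⟨hM.pendant_of_mem hD he hv, hw⟩, he⟩

variable {p : {v // ¬ Pendant G v} → Fin n}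

theorem eq_mk_of_mem_pendantMatching (hp : p ∈ pendantChoices G)
    (he : e ∈ pendantMatching G p) (hu : ¬ Pendant G u) (hue : u ∈ e) :
    e = s(u, p ⟨u, hu⟩) := by
  rcases Finset.mem_union.mp he with he | he
  · obtain ⟨v, -, rfl⟩ := Finset.mem_image.mp he
    rcases Sym2.mem_iff.mp hue with rfl | h
    · rfl
    · exact absurd (h ▸ (mem_pendantChoices.mp hp v).1) hu
  · exact absurd ((mem_pendantEdges.mp he).2 u hue) hu

theorem isMatching_pendantMatching (hp : p ∈ pendantChoices G) :
    IsMatching G (pendantMatching G p) := by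
  have hedge : ∀ e ∈ pendantMatching G p, IsEdge G e := by
    intro e he
    rcases Finset.mem_union.mp he with he | he
    · obtain ⟨v, -, rfl⟩ := Finset.mem_image.mp he
      exact ⟨v, p v, rfl, (mem_pendantChoices.mp hp v).2⟩
    · exact (mem_pendantEdges.mp he).1
  refine ⟨hedge, fun e he f hf hef u hue huf => hef ?_⟩
  by_cases hu : Pendant G u
  · exact hu.eq_of_isEdge (hedge e he) (hedge f hf) hue huf
  · rw [eq_mk_of_mem_pendantMatching hp he hu hue, eq_mk_of_mem_pendantMatching hp hf hu huf]

theorem pendantMatching_injOn :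
    Set.InjOn (pendantMatching G) (pendantChoices G) := by
  intro p hp p' hp' h
  funext v
  have hv : s(v.1, p v) ∈ pendantMatching G p' :=
    h ▸ Finset.mem_union_left _ (Finset.mem_image_of_mem _ (Finset.mem_univ v))
  exact Sym2.congr_right.mp (eq_mk_of_mem_pendantMatching hp' hv v.2 (Sym2.mem_mk_left _ _))

theorem injective_mk_of_mem_pendantChoices (hp : p ∈ pendantChoices G) :
    Function.Injective fun v => s(v.1, p v) := fun v w h => by
  rcases Sym2.eq_iff.mp h with ⟨h, -⟩ | ⟨h, -⟩
  · exact Subtype.ext h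
  · exact absurd (h ▸ (mem_pendantChoices.mp hp w).1) v.2

theorem disjoint_image_mk_pendantEdges :
    Disjoint (Finset.univ.image fun v => s(v.1, p v)) (pendantEdges G) := by
  refine Finset.disjoint_left.mpr fun e he hpe => ?_
  obtain ⟨v, -, rfl⟩ := Finset.mem_image.mp he
  exact v.2 ((mem_pendantEdges.mp hpe).2 v (Sym2.mem_mk_left _ _))

theorem card_pendantMatching (hp : p ∈ pendantChoices G) :
    (pendantMatching G p).card =
      Fintype.card {v // ¬ Pendant G v} + (pendantEdges G).card := by
  rw [pendantMatching, Finset.card_union_of_disjoint disjoint_image_mk_pendantEdges,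
    Finset.card_image_of_injective _ (injective_mk_of_mem_pendantChoices hp), Finset.card_univ]

theorem exists_isMaxMatching (G : Fin n → Fin n → Prop) : ∃ M, IsMaxMatching G M := by
  obtain ⟨M, hM, hmax⟩ := Set.exists_max_image {M | IsMatching G M} Finset.card
    (Set.toFinite _) ⟨∅, by simp [IsMatching]⟩
  exact ⟨M, hM, hmax⟩

theorem IsMaxMatching.exists_eq_pendantMatching (hD : InClassD G) (hM : IsMaxMatching G M) :
    ∃ p ∈ pendantChoices G, pendantMatching G p = M := by
  choose p hpN hpM using fun v : {v // ¬ Pendant G v} => hM.exists_mem_pendantNbrs hD v.2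
  have hp : p ∈ pendantChoices G := Fintype.mem_piFinset.mpr hpN
  refine ⟨p, hp, Finset.Subset.antisymm (Finset.union_subset ?_ hM.pendantEdges_subset) ?_⟩
  · exact Finset.image_subset_iff.mpr fun v _ => hpM v
  · intro e he
    by_cases hall : ∀ u ∈ e, Pendant G u
    · exact Finset.mem_union_right _ (mem_pendantEdges.mpr ⟨hM.1.1 e he, hall⟩)
    · obtain ⟨u, hue, hu⟩ := not_forall₂.mp hall
      rw [hM.1.eq_of_mem he (hpM ⟨u, hu⟩) hue (Sym2.mem_mk_left _ _)]
      exact Finset.mem_union_left _ (Finset.mem_image_of_mem _ (Finset.mem_univ _))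

theorem isMaxMatching_pendantMatching (hD : InClassD G) (hp : p ∈ pendantChoices G) :
    IsMaxMatching G (pendantMatching G p) := by
  obtain ⟨M, hM⟩ := exists_isMaxMatching G
  obtain ⟨q, hq, rfl⟩ := hM.exists_eq_pendantMatching hD
  refine ⟨isMatching_pendantMatching hp, fun M' hM' => ?_⟩
  rw [card_pendantMatching hp, ← card_pendantMatching hq]
  exact hM.2 M' hM'

end PendantMatching

section MatchingProduct

open scoped Classical

variable {n : ℕ} {A : Matrix (Fin n) (Fin n) ℝ}

noncomputable def pendantWeight (A : Matrix (Fin n) (Fin n) ℝ) (v : Fin n) : ℝ :=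
  ∑ q ∈ pendantNbrs (DA A) v, A v q * A q v

theorem cycProd_mk (A : Matrix (Fin n) (Fin n) ℝ) (i j : Fin n) :
    cycProd A s(i, j) = A i j * A j i :=
  rfl

theorem mem_maxMatchings {M : Finset (Sym2 (Fin n))} :
    M ∈ maxMatchings A ↔ IsMaxMatching (DA A) M := by
  simp [maxMatchings]

theorem prod_cycProd_pendantEdges_ne_zero (A : Matrix (Fin n) (Fin n) ℝ) :
    ∏ e ∈ pendantEdges (DA A), cycProd A e ≠ 0 := by
  refine Finset.prod_ne_zero_iff.mpr fun e he => ?_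
  obtain ⟨⟨i, j, rfl, hij⟩, -⟩ := mem_pendantEdges.mp he
  exact mul_ne_zero hij.2.1 hij.2.2

theorem matchProd_pendantMatching {p : {v // ¬ Pendant (DA A) v} → Fin n}
    (hp : p ∈ pendantChoices (DA A)) :
    matchProd A (pendantMatching (DA A) p) =
      (∏ v : {v // ¬ Pendant (DA A) v}, A v (p v) * A (p v) v) * ∏ e ∈ pendantEdges (DA A), cycProd A e := by
  rw [matchProd, pendantMatching, Finset.prod_union disjoint_image_mk_pendantEdges,
    Finset.prod_image fun v _ w _ h => injective_mk_of_mem_pendantChoices hp h]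
  rfl

theorem delta_eq_prod_pendantWeight (hD : InClassD (DA A)) :
    Delta A = (∏ v : {v // ¬ Pendant (DA A) v}, pendantWeight A v) *
      ∏ e ∈ pendantEdges (DA A), cycProd A e := by
  simp only [pendantWeight]
  rw [Finset.prod_univ_sum, Finset.sum_mul, Delta]
  symm
  refine Finset.sum_bij (fun p _ => pendantMatching (DA A) p)
    (fun p hp => mem_maxMatchings.mpr (isMaxMatching_pendantMatching hD hp))
    (fun p hp q hq h => pendantMatching_injOn hp hq h)
    (fun M hM => ?_) (fun p hp => (matchProd_pendantMatching hp).symm)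
  obtain ⟨p, hp, rfl⟩ := (mem_maxMatchings.mp hM).exists_eq_pendantMatching hD
  exact ⟨p, hp, rfl⟩

end MatchingProduct

section Kernel

open scoped Classical

variable {n : ℕ} {A : Matrix (Fin n) (Fin n) ℝ} {i q v : Fin n}

theorem adjd_of_ne_zero (hS : IsSSD (DA A)) (h : A i v ≠ 0) : Adjd (DA A) i v :=
  ⟨fun hiv => hS.1 i (hiv ▸ h), h, hS.2 i v h⟩

theorem mulVec_apply_of_pendant (hS : IsSSD (DA A)) (hq : Pendant (DA A) q)
    (hqv : Adjd (DA A) q v) (x : Fin n → ℝ) : (A *ᵥ x) q = A q v * x v := by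
  show ∑ j, A q j * x j = _
  refine Finset.sum_eq_single v (fun j _ hjv => ?_) (by simp)
  by_contra h
  exact hjv (hq.unique (adjd_of_ne_zero hS (left_ne_zero_of_mul h)) hqv)

theorem mulVec_single_of_pendant (hS : IsSSD (DA A)) (hq : Pendant (DA A) q)
    (hqv : Adjd (DA A) q v) : A *ᵥ Pi.single q 1 = Pi.single v (A v q) := by
  funext k
  rw [mulVec_single_one, col_apply, Pi.single_apply]
  split_ifs with hkv
  · rw [hkv]
  · by_contra h
    exact hkv (hq.unique (adjd_of_ne_zero hS h).symm hqv)

theorem single_mem_range_of_pendant (hS : IsSSD (DA A)) (hq : Pendant (DA A) q)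
    (hqv : Adjd (DA A) q v) (c : ℝ) : Pi.single v c ∈ LinearMap.range A.mulVecLin := by
  refine ⟨(c / A v q) • Pi.single q (1 : ℝ), ?_⟩
  rw [mulVecLin_apply, mulVec_smul, mulVec_single_of_pendant hS hq hqv, ← Pi.single_smul,
    smul_eq_mul, div_mul_cancel₀ c hqv.symm.2.1]

theorem mulVec_apply_eq_sum_pendantNbrs (hS : IsSSD (DA A)) {y : Fin n → ℝ}
    (hy : ∀ j, ¬ Pendant (DA A) j → y j = 0) (v : Fin n) :
    (A *ᵥ y) v = ∑ q ∈ pendantNbrs (DA A) v, A v q * y q := by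
  refine (Finset.sum_subset (Finset.subset_univ (pendantNbrs (DA A) v)) fun j _ hj => ?_).symm
  by_contra h
  have hvj := adjd_of_ne_zero hS (left_ne_zero_of_mul h)
  exact right_ne_zero_of_mul h (hy j fun hj' => hj (mem_pendantNbrs.mpr ⟨hj', hvj⟩))

theorem mulVec_eq_zero_of_mulVec_mulVec_eq_zero (hD : InClassD (DA A))
    (hw : ∀ v, ¬ Pendant (DA A) v → pendantWeight A v ≠ 0) {x : Fin n → ℝ}
    (hx : A *ᵥ (A *ᵥ x) = 0) : A *ᵥ x = 0 := by
  have hS := hD.1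
  have hy_nbr : ∀ q v, Pendant (DA A) q → Adjd (DA A) q v → (A *ᵥ x) v = 0 := by
    intro q v hq hqv
    have h0 : A q v * (A *ᵥ x) v = 0 := by
      rw [← mulVec_apply_of_pendant hS hq hqv, hx, Pi.zero_apply]
    exact (mul_eq_zero.mp h0).resolve_left hqv.2.1
  have hy : ∀ v, ¬ Pendant (DA A) v → (A *ᵥ x) v = 0 := fun v hv =>
    let ⟨q, hvq, hq⟩ := hD.2 v hv
    hy_nbr q v hq hvq.symm
  have hx_np : ∀ v, ¬ Pendant (DA A) v → x v = 0 := by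
    intro v hv
    have h0 : pendantWeight A v * x v = (A *ᵥ (A *ᵥ x)) v := by
      rw [pendantWeight, Finset.sum_mul, mulVec_apply_eq_sum_pendantNbrs hS hy]
      refine Finset.sum_congr rfl fun q hq => ?_
      obtain ⟨hqp, hvq⟩ := mem_pendantNbrs.mp hq
      rw [mulVec_apply_of_pendant hS hqp hvq.symm, mul_assoc]
    rw [hx, Pi.zero_apply] at h0
    exact (mul_eq_zero.mp h0).resolve_left (hw v hv)
  funext i
  by_cases hi : Pendant (DA A) i
  · obtain ⟨v, hiv⟩ := hi.exists
    by_cases hv : Pendant (DA A) v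
    · exact hy_nbr v i hv hiv.symm
    · rw [mulVec_apply_of_pendant hS hi hiv, hx_np v hv, mul_zero, Pi.zero_apply]
  · exact hy i hi

theorem exists_mulVec_mulVec_eq_zero_of_pendantWeight_eq_zero (hD : InClassD (DA A))
    (hv : ¬ Pendant (DA A) v) (hw : pendantWeight A v = 0) :
    ∃ x, A *ᵥ (A *ᵥ x) = 0 ∧ A *ᵥ x ≠ 0 := by
  have hS := hD.1
  set y : Fin n → ℝ := fun i => if Pendant (DA A) i then A i v else 0
  have hy_eq : y = A *ᵥ Pi.single v 1 - ∑ i ∈ {i | ¬ Pendant (DA A) i}, Pi.single i (A i v) := by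
    funext k
    by_cases hk : Pendant (DA A) k <;> simp [y, hk, Finset.sum_apply, Pi.single_apply]
  obtain ⟨x, hx⟩ : y ∈ LinearMap.range A.mulVecLin := by
    rw [hy_eq]
    refine Submodule.sub_mem _ (LinearMap.mem_range_self _ _) (Submodule.sum_mem _ fun i hi => ?_)
    obtain ⟨q, hiq, hq⟩ := hD.2 i (Finset.mem_filter.mp hi).2
    exact single_mem_range_of_pendant hS hq hiq.symm _
  rw [mulVecLin_apply] at hx
  refine ⟨x, ?_, ?_⟩
  · funext k
    rw [hx, mulVec_apply_eq_sum_pendantNbrs hS (fun j hj => if_neg hj), Pi.zero_apply]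
    by_cases hk : k = v
    · rw [hk, ← hw, pendantWeight]
      exact Finset.sum_congr rfl fun q hq => by simp [(mem_pendantNbrs.mp hq).1]
    · refine Finset.sum_eq_zero fun q hq => ?_
      obtain ⟨hqp, hkq⟩ := mem_pendantNbrs.mp hq
      simp only [if_pos hqp]
      by_contra h
      exact hk (hqp.unique hkq.symm (adjd_of_ne_zero hS (right_ne_zero_of_mul h)))
  · obtain ⟨q, hvq, hq⟩ := hD.2 v hv
    intro h0
    have hq0 := congrFun h0 q
    simp only [hx, y, if_pos hq, Pi.zero_apply] at hq0
    exact hvq.symm.2.1 hq0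

end Kernel

theorem group_inverse_exists_iff_delta_ne_zero_general {n : ℕ} (A : Matrix (Fin n) (Fin n) ℝ)
    (hD : InClassD (DA A)) :
    (∃ X, IsGroupInverse A X) ↔ Delta A ≠ 0 := by
  classical
  rw [exists_isGroupInverse_iff, delta_eq_prod_pendantWeight hD,
    mul_ne_zero_iff_right (prod_cycProd_pendantEdges_ne_zero A), Finset.prod_ne_zero_iff]
  constructor
  · intro h v _ hw
    obtain ⟨x, hx, hx'⟩ := exists_mulVec_mulVec_eq_zero_of_pendantWeight_eq_zero hD v.2 hw
    exact hx' (h x hx)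
  · exact fun h x => mulVec_eq_zero_of_mulVec_mulVec_eq_zero hD
      (fun v hv => h ⟨v, hv⟩ (Finset.mem_univ _))

/-- Proposition: for `D(A) ∈ 𝒟` strongly connected, the group inverse `A^#` exists
iff `Δ_A ≠ 0`. -/
theorem group_inverse_exists_iff_delta_ne_zero {n : ℕ} (A : Matrix (Fin n) (Fin n) ℝ)
    (hD : InClassD (DA A)) (hSC : StronglyConnected (DA A)) :
    (∃ X, IsGroupInverse A X) ↔ Delta A ≠ 0 :=
  group_inverse_exists_iff_delta_ne_zero_general A hD
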